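/- Let A = k[x]/(x²−hx−t) with the Frobenius structure above, and let the twisted action be μ̃(a⊗b) = ab − ε(b)·(2x−h)a and the twisted coaction Δ̃(a) = Δ(a) − (2x−h)a ⊗ 1. Then the Frobenius-type compatibility holds: (μ̃⊗id)∘(id⊗Δ) = Δ̃∘μ̃ = (id⊗μ)∘(Δ̃⊗id) as maps A⊗A → A⊗A. -/

import Mathlib

/-!
Write `E = 2x - h`. The comultiplication `Δ` is a map of `A`-bimodules,
`Δ a = (a ⊗ 1) Δ(1) = Δ(1) (1 ⊗ a)`, with counit `ε`, and `Δ̃(1) = 1 ⊗ x - x ⊗ 1`; in particular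
`Δ̃` is left `A`-linear too. Each of the three maps then sends `a ⊗ b` to `Δ(ab) - Ea ⊗ b`: for
the two outer ones this is the bimodule property plus the counit law, and for the middle one it is
`Δ̃(ab) - ε(b) Δ̃(Ea) = Δ(ab) - Eab ⊗ 1 - (Ea ⊗ 1)(1 ⊗ b - b ⊗ 1)`, using
`ε(b) (1 ⊗ x - x ⊗ 1) = 1 ⊗ b - b ⊗ 1`. All identities about `A` are checked on the basis `{1, x}`.
-/

open Polynomial TensorProduct

/-- The Frobenius algebra `C_{h,t} = k[x]/(x² - hx - t)`. -/
noncomputable abbrev Cht (k : Type) [CommRing k] (h t : k) : Type :=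
  AdjoinRoot (X ^ 2 - C h * X - C t : k[X])

/-- The generator `x` of `C_{h,t}`. -/
noncomputable abbrev xg (k : Type) [CommRing k] (h t : k) : Cht k h t :=
  AdjoinRoot.root _

namespace Cht

variable {k : Type} [CommRing k] {h t : k}

theorem xg_mul_xg : xg k h t * xg k h t = h • xg k h t + t • 1 := by
  have hroot := AdjoinRoot.eval₂_root (X ^ 2 - C h * X - C t : k[X])
  simp only [eval₂_sub, eval₂_mul, eval₂_X, eval₂_C, pow_two, sub_eq_iff_eq_add] at hroot
  rw [hroot, Algebra.smul_def, Algebra.smul_def, mul_one, AdjoinRoot.algebraMap_eq]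
  ring

theorem linearMap_ext {M : Type*} [AddCommMonoid M] [Module k M] {f g : Cht k h t →ₗ[k] M}
    (hf1 : f 1 = g 1) (hfx : f (xg k h t) = g (xg k h t)) : f = g := by
  have hmonic : (X ^ 2 - C h * X - C t : k[X]).Monic := by monicity!
  have hdeg : (X ^ 2 - C h * X - C t : k[X]).natDegree ≤ 2 := by compute_degree
  refine (AdjoinRoot.powerBasis' hmonic).basis.ext fun ⟨i, hi⟩ => ?_
  rw [PowerBasis.coe_basis, AdjoinRoot.powerBasis'_gen]
  change i < (X ^ 2 - C h * X - C t : k[X]).natDegree at hi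
  obtain _ | _ | i := i
  · simpa using hf1
  · simpa using hfx
  · omega


theorem comul_eq_tmul_one_mul {Δ : Cht k h t →ₗ[k] Cht k h t ⊗[k] Cht k h t}
    (hΔ1 : Δ 1 = 1 ⊗ₜ[k] xg k h t + xg k h t ⊗ₜ[k] 1 - h • ((1 : Cht k h t) ⊗ₜ[k] 1))
    (hΔx : Δ (xg k h t) = xg k h t ⊗ₜ[k] xg k h t + t • ((1 : Cht k h t) ⊗ₜ[k] 1))
    (a : Cht k h t) : Δ a = (a ⊗ₜ[k] 1) * Δ 1 := by
  refine LinearMap.congr_fun (linearMap_ext (g := LinearMap.mulRight k (Δ 1) ∘ₗ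
    Algebra.TensorProduct.includeLeft.toLinearMap) ?_ ?_) a
  · simp [← Algebra.TensorProduct.one_def]
  · simp [hΔ1, hΔx, mul_add, mul_sub, xg_mul_xg, add_tmul, ← smul_tmul']
    abel

theorem comul_eq_comul_one_mul {Δ : Cht k h t →ₗ[k] Cht k h t ⊗[k] Cht k h t}
    (hΔ1 : Δ 1 = 1 ⊗ₜ[k] xg k h t + xg k h t ⊗ₜ[k] 1 - h • ((1 : Cht k h t) ⊗ₜ[k] 1))
    (hΔx : Δ (xg k h t) = xg k h t ⊗ₜ[k] xg k h t + t • ((1 : Cht k h t) ⊗ₜ[k] 1))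
    (a : Cht k h t) : Δ a = Δ 1 * (1 ⊗ₜ[k] a) := by
  refine LinearMap.congr_fun (linearMap_ext (g := LinearMap.mulLeft k (Δ 1) ∘ₗ
    Algebra.TensorProduct.includeRight.toLinearMap) ?_ ?_) a
  · simp [← Algebra.TensorProduct.one_def]
  · simp [hΔ1, hΔx, add_mul, sub_mul, xg_mul_xg, tmul_add]
    abel

theorem lid_rTensor_comul {Δ : Cht k h t →ₗ[k] Cht k h t ⊗[k] Cht k h t}
    {ε : Cht k h t →ₗ[k] k}
    (hΔ1 : Δ 1 = 1 ⊗ₜ[k] xg k h t + xg k h t ⊗ₜ[k] 1 - h • ((1 : Cht k h t) ⊗ₜ[k] 1))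
    (hΔx : Δ (xg k h t) = xg k h t ⊗ₜ[k] xg k h t + t • ((1 : Cht k h t) ⊗ₜ[k] 1))
    (hε1 : ε 1 = 0) (hεx : ε (xg k h t) = 1) (a : Cht k h t) :
    TensorProduct.lid k (Cht k h t) (ε.rTensor _ (Δ a)) = a := by
  refine LinearMap.congr_fun (linearMap_ext (f := (TensorProduct.lid k (Cht k h t)).toLinearMap ∘ₗ
    ε.rTensor _ ∘ₗ Δ) (g := LinearMap.id) ?_ ?_) a
  · simp [hΔ1, hε1, hεx]
  · simp [hΔx, hε1, hεx]

/-- `ε` reads off the `x`-coordinate in the basis `{1, x}`, and `1 ⊗ b - b ⊗ 1` vanishes at `b = 1`. -/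
theorem one_tmul_sub_tmul_one {ε : Cht k h t →ₗ[k] k} (hε1 : ε 1 = 0) (hεx : ε (xg k h t) = 1)
    (b : Cht k h t) :
    (1 : Cht k h t) ⊗ₜ[k] b - b ⊗ₜ[k] 1 = ε b • (1 ⊗ₜ[k] xg k h t - xg k h t ⊗ₜ[k] 1) := by
  refine LinearMap.congr_fun (linearMap_ext (f := TensorProduct.mk k _ _ 1 -
    (TensorProduct.mk k _ _).flip 1) (g := ε.smulRight (1 ⊗ₜ[k] xg k h t - xg k h t ⊗ₜ[k] 1))
    ?_ ?_) b
  · simp [hε1]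
  · simp [hεx]

theorem comul_one_sub_tmul_one {Δ : Cht k h t →ₗ[k] Cht k h t ⊗[k] Cht k h t}
    (hΔ1 : Δ 1 = 1 ⊗ₜ[k] xg k h t + xg k h t ⊗ₜ[k] 1 - h • ((1 : Cht k h t) ⊗ₜ[k] 1)) :
    Δ 1 - (2 * xg k h t - algebraMap k (Cht k h t) h) ⊗ₜ[k] 1 =
      1 ⊗ₜ[k] xg k h t - xg k h t ⊗ₜ[k] 1 := by
  rw [hΔ1, Algebra.algebraMap_eq_smul_one, two_mul, sub_tmul, add_tmul, smul_tmul']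
  abel

end Cht

section TwistedMul

variable {k A : Type*} [CommRing k] [Ring A] [Algebra k A]

theorem map_mul'_assoc_tmul (w : A ⊗[k] A) (b : A) :
    TensorProduct.map LinearMap.id (LinearMap.mul' k A) (TensorProduct.assoc k A A A (w ⊗ₜ b)) =
      w * (1 ⊗ₜ b) := by
  induction w with
  | zero => simp
  | tmul u v => simp
  | add w₁ w₂ h₁ h₂ => simp [add_tmul, h₁, h₂, add_mul]

theorem map_assoc_symm_tmul_of_twisted {ε : A →ₗ[k] k} {e : A} {μt : A ⊗[k] A →ₗ[k] A}
    (hμt : ∀ a b, μt (a ⊗ₜ b) = a * b - ε b • (e * a)) (a : A) (w : A ⊗[k] A) :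
    TensorProduct.map μt LinearMap.id ((TensorProduct.assoc k A A A).symm (a ⊗ₜ w)) =
      (a ⊗ₜ 1) * w - (e * a) ⊗ₜ TensorProduct.lid k A (ε.rTensor A w) := by
  induction w with
  | zero => simp
  | tmul u v => simp [hμt, sub_tmul, smul_tmul]
  | add w₁ w₂ h₁ h₂ => simp only [tmul_add, map_add, h₁, h₂, mul_add]; abel

end TwistedMul

/-- Frobenius-type compatibility of the twisted action `μ̃` and twisted coaction `Δ̃`:
`(μ̃⊗id)∘(id⊗Δ) = Δ̃∘μ̃ = (id⊗μ)∘(Δ̃⊗id)` as maps `A⊗A → A⊗A`. -/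
theorem stmt19 (k : Type) [CommRing k] (h t : k)
    (Δ : Cht k h t →ₗ[k] Cht k h t ⊗[k] Cht k h t)
    (ε : Cht k h t →ₗ[k] k)
    (hΔ1 : Δ 1 = 1 ⊗ₜ[k] xg k h t + xg k h t ⊗ₜ[k] 1 - h • ((1 : Cht k h t) ⊗ₜ[k] 1))
    (hΔx : Δ (xg k h t) = xg k h t ⊗ₜ[k] xg k h t + t • ((1 : Cht k h t) ⊗ₜ[k] 1))
    (hε1 : ε 1 = 0) (hεx : ε (xg k h t) = 1)
    -- the twisted action `μ̃(a⊗b) = ab − ε(b)·(2x−h)a`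
    (μt : Cht k h t ⊗[k] Cht k h t →ₗ[k] Cht k h t)
    (hμt : ∀ a b : Cht k h t,
      μt (a ⊗ₜ[k] b)
        = a * b - ε b • ((2 * xg k h t - algebraMap k (Cht k h t) h) * a))
    -- the twisted coaction `Δ̃(a) = Δ(a) − (2x−h)a ⊗ 1`
    (Δt : Cht k h t →ₗ[k] Cht k h t ⊗[k] Cht k h t)
    (hΔt : ∀ a : Cht k h t,
      Δt a = Δ a - ((2 * xg k h t - algebraMap k (Cht k h t) h) * a) ⊗ₜ[k] 1) :
    (TensorProduct.map μt LinearMap.id).comp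
        (((TensorProduct.assoc k (Cht k h t) (Cht k h t) (Cht k h t)).symm.toLinearMap).comp
          (TensorProduct.map LinearMap.id Δ))
      = Δt.comp μt ∧
    Δt.comp μt
      = (TensorProduct.map LinearMap.id (LinearMap.mul' k (Cht k h t))).comp
          (((TensorProduct.assoc k (Cht k h t) (Cht k h t) (Cht k h t)).toLinearMap).comp
            (TensorProduct.map Δt LinearMap.id)) := by
  set e := 2 * xg k h t - algebraMap k (Cht k h t) h
  have hΔt_eq : ∀ c, Δt c = (c ⊗ₜ[k] 1) * (1 ⊗ₜ[k] xg k h t - xg k h t ⊗ₜ[k] 1) := by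
    intro c
    rw [hΔt, Cht.comul_eq_tmul_one_mul hΔ1 hΔx, ← Cht.comul_one_sub_tmul_one hΔ1, mul_sub,
      Algebra.TensorProduct.tmul_mul_tmul, mul_one, mul_comm c]
  have hfrob : ∀ a b, Δt (μt (a ⊗ₜ[k] b)) = Δ (a * b) - (e * a) ⊗ₜ[k] b := by
    intro a b
    rw [hμt, map_sub, map_smul, hΔt_eq (e * a), ← mul_smul_comm,
      ← Cht.one_tmul_sub_tmul_one hε1 hεx, hΔt, mul_sub, Algebra.TensorProduct.tmul_mul_tmul,
      Algebra.TensorProduct.tmul_mul_tmul, mul_one, one_mul, mul_one, mul_assoc]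
    abel
  refine ⟨TensorProduct.ext' fun a b => ?_, TensorProduct.ext' fun a b => ?_⟩
  · simp only [LinearMap.comp_apply, map_tmul, LinearMap.id_apply, LinearEquiv.coe_coe,
      map_assoc_symm_tmul_of_twisted hμt, Cht.lid_rTensor_comul hΔ1 hΔx hε1 hεx, hfrob]
    rw [Cht.comul_eq_tmul_one_mul hΔ1 hΔx (a * b), Cht.comul_eq_tmul_one_mul hΔ1 hΔx b,
      ← mul_assoc, Algebra.TensorProduct.tmul_mul_tmul, one_mul]
  · simp only [LinearMap.comp_apply, map_tmul, LinearMap.id_apply, LinearEquiv.coe_coe,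
      map_mul'_assoc_tmul, hfrob, hΔt]
    rw [sub_mul (Δ a), Cht.comul_eq_comul_one_mul hΔ1 hΔx (a * b),
      Cht.comul_eq_comul_one_mul hΔ1 hΔx a, mul_assoc]
    simp only [Algebra.TensorProduct.tmul_mul_tmul, one_mul, mul_one]
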